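/- arXiv:1910.12310 — 3 statements merged into one kernel-verified Lean document; each statement's English description precedes it below -/
import Mathlib

section
/- There exists a universal constant C > 0 with the following property. Let G be a finite connected simple graph on a vertex set V of size n ≥ 2, equipped with a fixed linear order on V, and let k ≥ 1 be a real number. Set β = (log n)/(2k). Let (δ_u)_{u ∈ V} be independent random variables, each exponentially distributed with rate β (mean 1/β). Define the exponential start time decomposition by assigning each vertex w ∈ V the cluster label cluster(w) := the least vertex u ∈ V (in the fixed linear order) minimizing dist_G(u, w) − δ_u, where dist_G is graph distance. Then for every vertex v ∈ V, the expected number of distinct labels in the set {cluster(w) : w ∈ V, dist_G(v, w) ≤ 1} is at most C · n^{1/k}. That is, the ball B(v,1) of radius 1 around v intersects at most C · n^{1/k} clusters in expectation. -/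
/-!
A cluster label `u` met by the ball `B(v, 1)` is, by the triangle inequality, a minimiser of
`dist(u, v) - δ_u` up to an additive error `2`. Conditionally on the other shifts, being such a
near-minimiser asks `δ_u` to lie in a set translated by `2` from the set that makes `u` an exact
minimiser, and translating by `t` multiplies exponential probabilities by at most `e^{βt}`.
Exact minimisers are almost surely unique since the shifts have no atoms, so their probabilities
sum to at most `1`, and the expected number of clusters is at most `e^{2β} = n^{1/k}`.
-/

open MeasureTheory ProbabilityTheory Finset

instance nullSingletonClass_expMeasure (r : ℝ) : NullSingletonClass (expMeasure r) :=
  nullSingletonClass_withDensity _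

lemma exponentialPDF_sub_le {r t : ℝ} (hr : 0 ≤ r) (ht : 0 ≤ t) (z : ℝ) :
    exponentialPDF r (z - t) ≤ ENNReal.ofReal (Real.exp (r * t)) * exponentialPDF r z := by
  rw [exponentialPDF_eq, exponentialPDF_eq, ← ENNReal.ofReal_mul (Real.exp_pos _).le]
  refine ENNReal.ofReal_le_ofReal ?_
  split_ifs with hzt hz
  · rw [mul_left_comm, ← Real.exp_add]
    exact le_of_eq (by ring_nf)
  · linarith
  · positivity
  · simp

lemma expMeasure_preimage_add_le {r t : ℝ} (hr : 0 ≤ r) (ht : 0 ≤ t) {s : Set ℝ}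
    (hs : MeasurableSet s) :
    expMeasure r ((· + t) ⁻¹' s) ≤ ENNReal.ofReal (Real.exp (r * t)) * expMeasure r s := by
  have hexp : expMeasure r = volume.withDensity (exponentialPDF r) := rfl
  rw [hexp, withDensity_apply _ (measurable_add_const t hs), withDensity_apply _ hs,
    ← lintegral_indicator (measurable_add_const t hs), ← lintegral_indicator hs,
    ← lintegral_const_mul' _ _ ENNReal.ofReal_ne_top]
  calc ∫⁻ y, ((· + t) ⁻¹' s).indicator (exponentialPDF r) y
      = ∫⁻ y, s.indicator (fun z => exponentialPDF r (z - t)) (y + t) := by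
        congr 1 with y
        by_cases hy : y + t ∈ s <;> simp [hy]
    _ = ∫⁻ z, s.indicator (fun z => exponentialPDF r (z - t)) z :=
        lintegral_add_right_eq_self _ t
    _ ≤ ∫⁻ z, ENNReal.ofReal (Real.exp (r * t)) * s.indicator (exponentialPDF r) z := by
        refine lintegral_mono fun z => ?_
        by_cases hz : z ∈ s
        · simpa [hz] using exponentialPDF_sub_le hr ht z
        · simp [hz]

namespace ProbabilityTheory

variable {Ω α β : Type*} [MeasurableSpace Ω] [MeasurableSpace α] [MeasurableSpace β]
  {μ : Measure Ω} [IsFiniteMeasure μ]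

lemma IndepFun.measure_prodMk_preimage {X : Ω → α} {Y : Ω → β} (hXY : IndepFun X Y μ)
    (hX : AEMeasurable X μ) (hY : AEMeasurable Y μ) {S : Set (α × β)} (hS : MeasurableSet S) :
    μ {ω | (X ω, Y ω) ∈ S} = ∫⁻ x, μ.map Y (Prod.mk x ⁻¹' S) ∂μ.map X := by
  rw [← Measure.prod_apply hS, ← hXY.map_prod_eq_prod_map_map hX hY,
    Measure.map_apply_of_aemeasurable (hX.prodMk hY) hS]
  rfl

lemma IndepFun.measure_prodMk_add_mem_le {X : Ω → α} {Y : Ω → ℝ}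
    (hXY : IndepFun X Y μ) (hX : AEMeasurable X μ) (hY : AEMeasurable Y μ) {r t : ℝ}
    (hYr : μ.map Y = expMeasure r) (hr : 0 ≤ r) (ht : 0 ≤ t) {S : Set (α × ℝ)}
    (hS : MeasurableSet S) :
    μ {ω | (X ω, Y ω + t) ∈ S} ≤ ENNReal.ofReal (Real.exp (r * t)) * μ {ω | (X ω, Y ω) ∈ S} := by
  have hSt : MeasurableSet {p : α × ℝ | (p.1, p.2 + t) ∈ S} :=
    hS.preimage (measurable_fst.prodMk (measurable_snd.add_const t))
  rw [show {ω | (X ω, Y ω + t) ∈ S} = {ω | (X ω, Y ω) ∈ {p : α × ℝ | (p.1, p.2 + t) ∈ S}} from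
      rfl, hXY.measure_prodMk_preimage hX hY hSt, hXY.measure_prodMk_preimage hX hY hS, hYr,
    ← lintegral_const_mul' _ _ ENNReal.ofReal_ne_top]
  refine lintegral_mono fun x => ?_
  exact expMeasure_preimage_add_le (s := Prod.mk x ⁻¹' S) hr ht (measurable_prodMk_left hS)

lemma IndepFun.measure_eq_add_eq_zero {X Y : Ω → ℝ} (hXY : IndepFun X Y μ)
    (hX : AEMeasurable X μ) (hY : AEMeasurable Y μ) [NullSingletonClass (μ.map Y)] (c : ℝ) :
    μ {ω | Y ω = X ω + c} = 0 := by
  have hS : MeasurableSet {p : ℝ × ℝ | p.2 = p.1 + c} :=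
    measurableSet_eq_fun measurable_snd (measurable_fst.add_const c)
  rw [show {ω | Y ω = X ω + c} = {ω | (X ω, Y ω) ∈ {p : ℝ × ℝ | p.2 = p.1 + c}} from rfl,
    hXY.measure_prodMk_preimage hX hY hS]
  simp [Set.preimage, measure_singleton]

end ProbabilityTheory

section ExponentialRace

variable {Ω ι : Type*}

def nearMinEvent (a : ι → ℝ) (δ : ι → Ω → ℝ) (t : ℝ) (i : ι) : Set Ω :=
  {ω | ∀ j, a i - δ i ω ≤ a j - δ j ω + t}

lemma nearMinEvent_eq_setOf_mem [Fintype ι] [DecidableEq ι] (a : ι → ℝ) (δ : ι → Ω → ℝ) {t : ℝ}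
    (ht : 0 ≤ t) (i : ι) :
    nearMinEvent a δ t i = {ω | ((fun (j : ↥(univ.erase i)) => δ j ω), δ i ω + t) ∈
      {p : (↥(univ.erase i) → ℝ) × ℝ | ∀ j : ↥(univ.erase i), a i - p.2 ≤ a j - p.1 j}} := by
  ext ω
  simp only [nearMinEvent, Set.mem_ofPred_eq, Subtype.forall, mem_erase, mem_univ, and_true]
  refine ⟨fun h j _ => by linarith [h j], fun h j => ?_⟩
  rcases eq_or_ne j i with rfl | hji
  · linarith
  · linarith [h j hji]

variable [MeasurableSpace Ω] {μ : Measure Ω} [Fintype ι]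

lemma nullMeasurableSet_nearMinEvent {δ : ι → Ω → ℝ} (hδ : ∀ i, AEMeasurable (δ i) μ)
    (a : ι → ℝ) (t : ℝ) (i : ι) : NullMeasurableSet (nearMinEvent a δ t i) μ := by
  simp only [nearMinEvent, Set.ofPred_forall]
  exact .iInter fun j =>
    nullMeasurableSet_le ((hδ i).const_sub _) (((hδ j).const_sub _).add_const _)

variable {δ : ι → Ω → ℝ} {r : ℝ}

lemma measure_nearMinEvent_le (hindep : iIndepFun δ μ) (hδ : ∀ i, AEMeasurable (δ i) μ)
    (hδr : ∀ i, μ.map (δ i) = expMeasure r) (hr : 0 ≤ r) (a : ι → ℝ) {t : ℝ} (ht : 0 ≤ t)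
    (i : ι) :
    μ (nearMinEvent a δ t i) ≤ ENNReal.ofReal (Real.exp (r * t)) * μ (nearMinEvent a δ 0 i) := by
  classical
  have := hindep.isProbabilityMeasure
  have hS : MeasurableSet
      {p : (↥(univ.erase i) → ℝ) × ℝ | ∀ j : ↥(univ.erase i), a i - p.2 ≤ a j - p.1 j} := by
    simp only [Set.ofPred_forall]
    exact .iInter fun j => measurableSet_le (measurable_const.sub measurable_snd)
      (measurable_const.sub ((measurable_pi_apply j).comp measurable_fst))
  have hrest : IndepFun (fun ω (j : ↥(univ.erase i)) => δ j ω) (δ i) μ :=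
    (hindep.indepFun_finset₀ _ {i} (disjoint_singleton_right.mpr (notMem_erase i _)) hδ).comp
      measurable_id (measurable_pi_apply ⟨i, mem_singleton_self i⟩)
  rw [nearMinEvent_eq_setOf_mem a δ ht, nearMinEvent_eq_setOf_mem a δ le_rfl]
  simp_rw [add_zero]
  exact hrest.measure_prodMk_add_mem_le
    (aemeasurable_pi_lambda _ fun j => hδ j) (hδ i) (hδr i) hr ht hS

lemma sum_measure_nearMinEvent_zero_le_one (hindep : iIndepFun δ μ)
    (hδ : ∀ i, AEMeasurable (δ i) μ) (hδr : ∀ i, μ.map (δ i) = expMeasure r) (a : ι → ℝ) :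
    ∑ i, μ (nearMinEvent a δ 0 i) ≤ 1 := by
  have := hindep.isProbabilityMeasure
  have hdisj : Pairwise (Function.onFun (AEDisjoint μ) (nearMinEvent a δ 0)) := by
    intro i j hij
    have : NullSingletonClass (μ.map (δ j)) := hδr j ▸ inferInstance
    refine measure_mono_null (fun ω ⟨hi, hj⟩ => ?_)
      ((hindep.indepFun hij).measure_eq_add_eq_zero (hδ i) (hδ j) (a j - a i))
    have := hi j
    have := hj i
    simp only [Set.mem_ofPred_eq]
    linarith
  calc ∑ i, μ (nearMinEvent a δ 0 i) = μ (⋃ i, nearMinEvent a δ 0 i) := by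
        rw [measure_iUnion₀ hdisj (nullMeasurableSet_nearMinEvent hδ a 0), tsum_fintype]
    _ ≤ 1 := prob_le_one

lemma sum_measure_nearMinEvent_le (hindep : iIndepFun δ μ) (hδ : ∀ i, AEMeasurable (δ i) μ)
    (hδr : ∀ i, μ.map (δ i) = expMeasure r) (hr : 0 ≤ r) (a : ι → ℝ) {t : ℝ} (ht : 0 ≤ t) :
    ∑ i, μ (nearMinEvent a δ t i) ≤ ENNReal.ofReal (Real.exp (r * t)) :=
  calc ∑ i, μ (nearMinEvent a δ t i)
      ≤ ∑ i, ENNReal.ofReal (Real.exp (r * t)) * μ (nearMinEvent a δ 0 i) :=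
        sum_le_sum fun i _ => measure_nearMinEvent_le hindep hδ hδr hr a ht i
    _ = ENNReal.ofReal (Real.exp (r * t)) * ∑ i, μ (nearMinEvent a δ 0 i) := (mul_sum ..).symm
    _ ≤ ENNReal.ofReal (Real.exp (r * t)) :=
        mul_le_of_le_one_right' (sum_measure_nearMinEvent_zero_le_one hindep hδ hδr a)

lemma sum_measureReal_nearMinEvent_le (hindep : iIndepFun δ μ)
    (hδ : ∀ i, AEMeasurable (δ i) μ) (hδr : ∀ i, μ.map (δ i) = expMeasure r) (hr : 0 ≤ r)
    (a : ι → ℝ) {t : ℝ} (ht : 0 ≤ t) :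
    ∑ i, μ.real (nearMinEvent a δ t i) ≤ Real.exp (r * t) := by
  have := hindep.isProbabilityMeasure
  simp_rw [measureReal_def]
  rw [← ENNReal.toReal_sum fun i _ => measure_ne_top μ _]
  exact ENNReal.toReal_le_of_le_ofReal (Real.exp_pos _).le
    (sum_measure_nearMinEvent_le hindep hδ hδr hr a ht)

end ExponentialRace

open Classical in
lemma integral_le_sum_measureReal_of_le_card {Ω ι : Type*} [MeasurableSpace Ω] {μ : Measure Ω}
    [IsFiniteMeasure μ] [Fintype ι] {A : ι → Set Ω} (hA : ∀ i, NullMeasurableSet (A i) μ)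
    {f : Ω → ℝ} (hf₀ : ∀ ω, 0 ≤ f ω) (hf : ∀ ω, f ω ≤ (univ.filter fun i => ω ∈ A i).card) :
    ∫ ω, f ω ∂μ ≤ ∑ i, μ.real (A i) := by
  have hint : ∀ i, Integrable ((A i).indicator (1 : Ω → ℝ)) μ :=
    fun i => (integrable_const 1).indicator₀ (hA i)
  have hcard : ∀ ω, ((univ.filter fun i => ω ∈ A i).card : ℝ) = ∑ i, (A i).indicator 1 ω := by
    intro ω
    rw [card_filter]
    push_cast
    simp [Set.indicator_apply]
  calc ∫ ω, f ω ∂μ ≤ ∫ ω, ∑ i, (A i).indicator 1 ω ∂μ :=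
        integral_mono_of_nonneg (ae_of_all _ hf₀) (integrable_finsetSum _ fun i _ => hint i)
          (ae_of_all _ fun ω => (hf ω).trans_eq (hcard ω))
    _ = ∑ i, μ.real (A i) := by
        rw [integral_finsetSum _ fun i _ => hint i]
        refine sum_congr rfl fun i _ => ?_
        rw [integral_indicator₀ (hA i)]
        simp

lemma SimpleGraph.Connected.mem_nearMinEvent_of_minimizes {V Ω : Type*} {G : SimpleGraph V}
    (hG : G.Connected) {δ : V → Ω → ℝ} {ω : Ω} {u v w : V} (hvw : G.dist v w ≤ 1)
    (hu : ∀ u', (G.dist u w : ℝ) - δ u ω ≤ G.dist u' w - δ u' ω) :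
    ω ∈ nearMinEvent (fun x => (G.dist x v : ℝ)) δ 2 u := by
  intro u'
  have huv : (G.dist u v : ℝ) ≤ G.dist u w + 1 := by
    have := hG.dist_triangle (u := u) (v := w) (w := v)
    rw [G.dist_comm (u := w)] at this
    exact_mod_cast this.trans (by omega)
  have hu'w : (G.dist u' w : ℝ) ≤ G.dist u' v + 1 := by
    exact_mod_cast (hG.dist_triangle (u := u') (v := v) (w := w)).trans (by omega)
  linarith [hu u']

/-- Corollary 3.1 of Miller–Peng–Vladu–Xu: in an exponential start time decomposition
with parameter `β = (log n) / (2k)`, for any vertex `v` the ball `B(v,1)` intersects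
`O(n^{1/k})` clusters in expectation. -/
theorem ball_intersects_clusters_expectation
    : ∃ C : ℝ, 0 < C ∧
      ∀ (V : Type) [Fintype V] [LinearOrder V] (G : SimpleGraph V),
        G.Connected → 2 ≤ Fintype.card V →
      ∀ k : ℝ, 1 ≤ k →
      ∀ (Ω : Type) [MeasurableSpace Ω] (μ : Measure Ω), IsProbabilityMeasure μ →
      ∀ (δ : V → Ω → ℝ),
        (∀ u : V, Measure.map (δ u) μ =
          expMeasure (Real.log (Fintype.card V) / (2 * k))) →
        iIndepFun δ μ →
      ∀ (cluster : Ω → V → V),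
        (∀ (ω : Ω) (w : V),
          IsLeast {u : V | ∀ u' : V,
              (G.dist u w : ℝ) - δ u ω ≤ (G.dist u' w : ℝ) - δ u' ω}
            (cluster ω w)) →
      ∀ v : V,
        ∫ ω, ((((Finset.univ.filter (fun w => G.dist v w ≤ 1))).image
            (cluster ω)).card : ℝ) ∂μ
          ≤ C * (Fintype.card V : ℝ) ^ ((1 : ℝ) / k) := by
  classical
  refine ⟨1, one_pos, ?_⟩
  intro V _ _ G hG hn k hk Ω _ μ _ δ hδr hindep cluster hcluster v
  set β := Real.log (Fintype.card V) / (2 * k)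
  have hβ : 0 < β := div_pos (Real.log_pos (by exact_mod_cast hn)) (by linarith)
  have hδ : ∀ u, AEMeasurable (δ u) μ := fun u => aemeasurable_of_map_neZero <| by
    rw [hδr u]
    have := isProbabilityMeasure_expMeasure hβ
    infer_instance
  have hcount : ∀ ω, ((univ.filter fun w => G.dist v w ≤ 1).image (cluster ω)).card ≤
      (univ.filter fun u => ω ∈ nearMinEvent (fun x => (G.dist x v : ℝ)) δ 2 u).card :=
    fun ω => card_le_card <| image_subset_iff.2 fun w hw => mem_filter.2
      ⟨mem_univ _, hG.mem_nearMinEvent_of_minimizes (mem_filter.1 hw).2 (hcluster ω w).1⟩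
  calc _ ≤ ∑ u, μ.real (nearMinEvent (fun x => (G.dist x v : ℝ)) δ 2 u) :=
        integral_le_sum_measureReal_of_le_card (fun u => nullMeasurableSet_nearMinEvent hδ _ 2 u)
          (fun ω => by positivity) (fun ω => mod_cast hcount ω)
    _ ≤ Real.exp (β * 2) := sum_measureReal_nearMinEvent_le hindep hδ hδr hβ.le _ zero_le_two
    _ = 1 * (Fintype.card V : ℝ) ^ ((1 : ℝ) / k) := by
        rw [one_mul, Real.rpow_def_of_pos (by positivity)]
        congr 1
        simp only [β]
        field_simp
end

section
/- There exists a universal constant C > 0 with the following property. Let c > 0 be a real constant, let G be a finite connected simple graph on a vertex set V of size n ≥ 2 equipped with a fixed linear order on V, and set β = 1/(2c) (which corresponds to choosing k = c · log n in the exponential start time decomposition). Let (δ_u)_{u ∈ V} be independent random variables, each exponentially distributed with rate β, and define cluster(w) := the least vertex u ∈ V (in the fixed linear order) minimizing dist_G(u, w) − δ_u. Then for every vertex v ∈ V, the expected number of distinct labels in {cluster(w) : w ∈ V, dist_G(v, w) ≤ 1} is at most C · e^{1/c}; in particular this expectation is bounded by a constant independent of n. -/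
open MeasureTheory ProbabilityTheory Finset

/-! A vertex `u` is the cluster of some `w ∈ B(v,1)` only if it is a `2`-near minimiser of
`j ↦ dist(j,v) - δ_j`. With `Z := max_{j ≠ u} (dist(u,v) - dist(j,v) + δ_j)`, independent of `δ_u`,
this event is `{Z - 2 ≤ δ_u}` while `u` being the strict minimiser is `{Z < δ_u}`; by
memorylessness of the exponential law the first is at most `e^{2β}` times as likely as the second.
Strict minimisers are unique, so the expected number of clusters is at most `e^{2β} = e^{1/c}`. -/

namespace ProbabilityTheory

lemma expMeasure_singleton (r x : ℝ) : expMeasure r {x} = 0 :=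
  withDensity_absolutelyContinuous _ _ (Real.volume_singleton)

lemma expMeasure_Ioi {r : ℝ} (hr : 0 < r) (x : ℝ) :
    expMeasure r (Set.Ioi x) = ENNReal.ofReal (Real.exp (-(r * max x 0))) := by
  have := isProbabilityMeasure_expMeasure hr
  rw [← Set.compl_Iic, prob_compl_eq_one_sub measurableSet_Iic, ← ofReal_cdf,
    cdf_expMeasure_eq hr, ← ENNReal.ofReal_one,
    ← ENNReal.ofReal_sub _ (by split_ifs <;> simp; positivity)]
  congr 1
  split_ifs with hx
  · rw [max_eq_left hx]; ring
  · simp [max_eq_right (not_le.1 hx).le]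

lemma expMeasure_Ici {r : ℝ} (hr : 0 < r) (x : ℝ) :
    expMeasure r (Set.Ici x) = ENNReal.ofReal (Real.exp (-(r * max x 0))) := by
  rw [← measure_congr (Ioi_ae_eq_Ici' (expMeasure_singleton r x)), expMeasure_Ioi hr]

lemma expMeasure_Ici_sub_le {r t : ℝ} (hr : 0 < r) (ht : 0 ≤ t) (x : ℝ) :
    expMeasure r (Set.Ici (x - t)) ≤
      ENNReal.ofReal (Real.exp (r * t)) * expMeasure r (Set.Ioi x) := by
  rw [expMeasure_Ici hr, expMeasure_Ioi hr, ← ENNReal.ofReal_mul (Real.exp_nonneg _),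
    ← Real.exp_add]
  gcongr
  have : max x 0 ≤ max (x - t) 0 + t :=
    max_le (by linarith [le_max_left (x - t) 0]) (by linarith [le_max_right (x - t) 0])
  nlinarith

variable {Ω : Type*} [MeasurableSpace Ω] {μ : Measure Ω}

lemma IndepFun.measure_preimage_eq_lintegral {α β : Type*} [MeasurableSpace α] [MeasurableSpace β]
    [IsFiniteMeasure μ] {X : Ω → α} {Y : Ω → β} (hX : AEMeasurable X μ) (hY : AEMeasurable Y μ)
    (hXY : IndepFun X Y μ) {S : Set (α × β)} (hS : MeasurableSet S) :
    μ ((fun ω => (X ω, Y ω)) ⁻¹' S) = ∫⁻ x, μ.map Y (Prod.mk x ⁻¹' S) ∂μ.map X := by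
  rw [← Measure.map_apply_of_aemeasurable (hX.prodMk hY) hS,
    (indepFun_iff_map_prod_eq_prod_map_map hX hY).1 hXY, Measure.prod_apply hS]

theorem IndepFun.measure_sub_le_le_exp_mul_measure_lt [IsFiniteMeasure μ] {r t : ℝ} (hr : 0 < r)
    (ht : 0 ≤ t) {Y Z : Ω → ℝ} (hY : AEMeasurable Y μ) (hZ : AEMeasurable Z μ)
    (hYexp : μ.map Y = expMeasure r) (hZY : IndepFun Z Y μ) :
    μ {ω | Z ω - t ≤ Y ω} ≤ ENNReal.ofReal (Real.exp (r * t)) * μ {ω | Z ω < Y ω} :=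
  calc μ {ω | Z ω - t ≤ Y ω} = ∫⁻ z, expMeasure r (Set.Ici (z - t)) ∂μ.map Z := by
        rw [← hYexp]
        exact hZY.measure_preimage_eq_lintegral hZ hY
          (measurableSet_le (measurable_fst.sub_const t) measurable_snd)
    _ ≤ ∫⁻ z, ENNReal.ofReal (Real.exp (r * t)) * expMeasure r (Set.Ioi z) ∂μ.map Z :=
        lintegral_mono fun z => expMeasure_Ici_sub_le hr ht z
    _ = ENNReal.ofReal (Real.exp (r * t)) * μ {ω | Z ω < Y ω} := by
        rw [lintegral_const_mul' _ _ ENNReal.ofReal_ne_top, ← hYexp]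
        congr 1
        exact (hZY.measure_preimage_eq_lintegral hZ hY
          (measurableSet_lt measurable_fst measurable_snd)).symm

variable {ι : Type*} [Fintype ι] [IsProbabilityMeasure μ] {r t : ℝ} {a : ι → ℝ} {g : ι → Ω → ℝ}

theorem iIndepFun.measure_near_argmin_le_exp_mul_measure_argmin [Nontrivial ι] (hr : 0 < r)
    (ht : 0 ≤ t) (hg : ∀ i, AEMeasurable (g i) μ) (hexp : ∀ i, μ.map (g i) = expMeasure r)
    (hind : iIndepFun g μ) (i : ι) :
    μ {ω | ∀ j, a i - g i ω - t ≤ a j - g j ω} ≤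
      ENNReal.ofReal (Real.exp (r * t)) * μ {ω | ∀ j ≠ i, a i - g i ω < a j - g j ω} := by
  classical
  set S := univ.erase i
  have hS : S.attach.Nonempty := attach_nonempty_iff.2 univ_nontrivial.erase_nonempty
  let φ : (S → ℝ) → ℝ := fun x => S.attach.sup' hS fun j => a i - a j + x j
  have hφ : Measurable φ := by
    convert Finset.measurable_sup' (f := fun (j : S) (x : S → ℝ) => a i - a j + x j) hS
      fun j _ => (measurable_pi_apply j).const_add _ using 1
    funext x
    rw [Finset.sup'_apply]
  have hZY : IndepFun (fun ω => φ fun j => g j ω) (g i) μ :=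
    (hind.indepFun_finset₀ S {i} (by simp [S]) hg).comp hφ
      (measurable_pi_apply (⟨i, mem_singleton_self i⟩ : ({i} : Finset ι)))
  have hZ : AEMeasurable (fun ω => φ fun j => g j ω) μ :=
    hφ.comp_aemeasurable (aemeasurable_pi_lambda _ fun j => hg j)
  convert hZY.measure_sub_le_le_exp_mul_measure_lt hr ht (hg i) hZ (hexp i) using 3 <;> ext ω <;>
    simp only [φ, S, Set.mem_ofPred_eq, sub_le_iff_le_add, Finset.sup'_le_iff, Finset.sup'_lt_iff,
      mem_attach, true_implies, Subtype.forall, mem_erase, mem_univ, and_true]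
  · refine ⟨fun h j _ => by linarith [h j], fun h j => ?_⟩
    rcases eq_or_ne j i with rfl | hj
    · linarith
    · linarith [h j hj]
  · exact forall₂_congr fun j _ => by constructor <;> intro <;> linarith

theorem iIndepFun.sum_measure_near_argmin_le [Nontrivial ι] (hr : 0 < r) (ht : 0 ≤ t)
    (hg : ∀ i, AEMeasurable (g i) μ) (hexp : ∀ i, μ.map (g i) = expMeasure r)
    (hind : iIndepFun g μ) :
    ∑ i, μ {ω | ∀ j, a i - g i ω - t ≤ a j - g j ω} ≤ ENNReal.ofReal (Real.exp (r * t)) := by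
  have hargmin : ∑ i, μ {ω | ∀ j ≠ i, a i - g i ω < a j - g j ω} ≤ 1 := by
    refine (sum_measure_le_measure_univ (fun i _ => ?_) fun i _ j _ hij => ?_).trans_eq
      measure_univ
    · simp only [Set.ofPred_forall]
      exact .iInter fun j => .iInter fun _ => nullMeasurableSet_lt (by fun_prop) (by fun_prop)
    · exact Disjoint.aedisjoint <|
        Set.disjoint_left.2 fun ω hi hj => (hi j hij.symm).not_gt (hj i hij)
  calc ∑ i, μ {ω | ∀ j, a i - g i ω - t ≤ a j - g j ω}
      ≤ ∑ i, ENNReal.ofReal (Real.exp (r * t)) * μ {ω | ∀ j ≠ i, a i - g i ω < a j - g j ω} :=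
        sum_le_sum fun i _ => hind.measure_near_argmin_le_exp_mul_measure_argmin hr ht hg hexp i
    _ ≤ ENNReal.ofReal (Real.exp (r * t)) := by
        rw [← mul_sum]
        exact mul_le_of_le_one_right' hargmin

end ProbabilityTheory

theorem MeasureTheory.integral_le_sum_measure_of_le_sum_indicator {Ω ι : Type*}
    [MeasurableSpace Ω] {μ : Measure Ω} [IsFiniteMeasure μ] [Fintype ι] {f : Ω → ℝ}
    {B : ι → Set Ω} (hB : ∀ i, NullMeasurableSet (B i) μ) (hf0 : 0 ≤ f)
    (hf : ∀ ω, f ω ≤ ∑ i, (B i).indicator 1 ω) :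
    ∫ ω, f ω ∂μ ≤ (∑ i, μ (B i)).toReal := by
  have hBint : ∀ i ∈ univ, Integrable ((B i).indicator (1 : Ω → ℝ)) μ :=
    fun i _ => (integrable_const (1 : ℝ)).indicator₀ (hB i)
  calc ∫ ω, f ω ∂μ ≤ ∫ ω, ∑ i, (B i).indicator 1 ω ∂μ :=
        integral_mono_of_nonneg (.of_forall hf0) (integrable_finsetSum _ hBint) (.of_forall hf)
    _ = (∑ i, μ (B i)).toReal := by
        rw [integral_finsetSum _ hBint, ENNReal.toReal_sum fun _ _ => measure_ne_top _ _]
        simp [integral_indicator₀ (hB _), measureReal_def]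

lemma SimpleGraph.Connected.dist_sub_le_of_forall_dist_sub_le {V : Type*} {G : SimpleGraph V}
    (hG : G.Connected) {δ : V → ℝ} {u w : V}
    (hu : ∀ j, (G.dist u w : ℝ) - δ u ≤ G.dist j w - δ j) (v j : V) :
    (G.dist u v : ℝ) - δ u - 2 * G.dist v w ≤ G.dist j v - δ j := by
  have huv : (G.dist u v : ℝ) ≤ G.dist u w + G.dist v w := by
    rw [G.dist_comm (u := v)]; exact_mod_cast hG.dist_triangle
  have hjw : (G.dist j w : ℝ) ≤ G.dist j v + G.dist v w := by exact_mod_cast hG.dist_triangle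
  linarith [hu j]

/-- With `β = 1/(2c)` (i.e. `k = c · log n`) in the exponential start time decomposition,
the expected number of clusters intersecting the radius-1 ball around any vertex is at most
`C · e^{1/c}`, a constant independent of `n`. -/
theorem ball_intersects_constant_clusters_expectation
    : ∃ C : ℝ, 0 < C ∧
      ∀ (c : ℝ), 0 < c →
      ∀ (V : Type) [Fintype V] [LinearOrder V] (G : SimpleGraph V),
        G.Connected → 2 ≤ Fintype.card V →
      ∀ (Ω : Type) [MeasurableSpace Ω] (μ : Measure Ω), IsProbabilityMeasure μ →
      ∀ (δ : V → Ω → ℝ),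
        (∀ u : V, Measure.map (δ u) μ = expMeasure (1 / (2 * c))) →
        iIndepFun δ μ →
      ∀ (cluster : Ω → V → V),
        (∀ (ω : Ω) (w : V),
          IsLeast {u : V | ∀ u' : V,
              (G.dist u w : ℝ) - δ u ω ≤ (G.dist u' w : ℝ) - δ u' ω}
            (cluster ω w)) →
      ∀ v : V,
        ∫ ω, ((((Finset.univ.filter (fun w => G.dist v w ≤ 1))).image
            (cluster ω)).card : ℝ) ∂μ
          ≤ C * Real.exp (1 / c) := by
  refine ⟨1, one_pos, fun c hc V _ _ G hG hcard Ω _ μ _ δ hδ hind cluster hcluster v => ?_⟩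
  have : Nontrivial V := Fintype.one_lt_card_iff_nontrivial.1 hcard
  have hr : 0 < 1 / (2 * c) := by positivity
  have hδm : ∀ u, AEMeasurable (δ u) μ := fun u =>
    .of_map_ne_zero <| hδ u ▸ (isProbabilityMeasure_expMeasure hr).ne_zero
  set B : V → Set Ω := fun u => {ω | ∀ j, (G.dist u v : ℝ) - δ u ω - 2 ≤ G.dist j v - δ j ω}
  have hB : ∀ u, NullMeasurableSet (B u) μ := fun u => by
    simp only [B, Set.ofPred_forall]
    exact .iInter fun j => nullMeasurableSet_le (by fun_prop) (by fun_prop)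
  have hcard_le : ∀ ω, (#((univ.filter fun w => G.dist v w ≤ 1).image (cluster ω)) : ℝ) ≤
      ∑ u, (B u).indicator 1 ω := fun ω => by
    classical
    have hsub : (univ.filter fun w => G.dist v w ≤ 1).image (cluster ω) ⊆
        univ.filter fun u => ω ∈ B u := by
      simp only [subset_iff, mem_image, mem_filter, mem_univ, true_and, forall_exists_index, and_imp]
      rintro _ w hw rfl j
      have hw : (G.dist v w : ℝ) ≤ 1 := by exact_mod_cast hw
      linarith [hG.dist_sub_le_of_forall_dist_sub_le (δ := (δ · ω)) (hcluster ω w).1 v j]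
    calc _ ≤ (#(univ.filter fun u => ω ∈ B u) : ℝ) := by exact_mod_cast card_le_card hsub
      _ = _ := by simp [card_filter, Set.indicator_apply]
  calc _ ≤ (∑ u, μ (B u)).toReal :=
        integral_le_sum_measure_of_le_sum_indicator hB (fun _ => by positivity) hcard_le
    _ ≤ Real.exp (1 / (2 * c) * 2) :=
        ENNReal.toReal_le_of_le_ofReal (Real.exp_nonneg _)
          (hind.sum_measure_near_argmin_le hr zero_le_two hδm hδ)
    _ = 1 * Real.exp (1 / c) := by field_simp
end

section
/- Let V be a finite set of size n ≥ 1, let d : V → ℕ be a degree function with total sum m = Σ_{v ∈ V} d(v) satisfying m ≥ n, and let the group size be g = ⌈m/n⌉. Then the total number of groups formed by partitioning each vertex's d(v) units of work into blocks of size g, namely Σ_{v ∈ V} ⌈d(v)/g⌉, is at most 2n. -/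
open Finset

/-- Chunked traversal block count: if each vertex `v`'s `d v` units of work are partitioned
into blocks of size `g = ⌈m/n⌉` where `m = ∑ v, d v ≥ n`, then the total number of blocks
`∑ v, ⌈d v / g⌉` is at most `2n`. -/
theorem total_groups_le_two_n {V : Type*} [Fintype V] (d : V → ℕ)
    (hn : 1 ≤ Fintype.card V)
    (hm : Fintype.card V ≤ ∑ v : V, d v) :
    ∑ v : V, (d v ⌈/⌉ ((∑ v : V, d v) ⌈/⌉ Fintype.card V)) ≤ 2 * Fintype.card V := by
  set n := Fintype.card V with hn_def
  set m := ∑ v : V, d v with hm_def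
  set g := m ⌈/⌉ n with hg_def
  have hg1 : 1 ≤ g := by
    rw [hg_def, Nat.ceilDiv_eq_add_pred_div]
    have : n ≤ m + n - 1 := by omega
    calc 1 = n / n := by rw [Nat.div_self (by omega)]
    _ ≤ (m + n - 1) / n := Nat.div_le_div_right this
  -- pointwise bound : d v ⌈/⌉ g ≤ d v / g + 1
  have hpt : ∀ v : V, d v ⌈/⌉ g ≤ d v / g + 1 := by
    intro v
    rw [Nat.ceilDiv_eq_add_pred_div]
    calc (d v + g - 1) / g ≤ (d v + g) / g := Nat.div_le_div_right (by omega)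
    _ = d v / g + 1 := Nat.add_div_right _ (by omega)
  have h1 : ∑ v : V, (d v ⌈/⌉ g) ≤ (∑ v : V, d v / g) + n := by
    calc ∑ v : V, (d v ⌈/⌉ g) ≤ ∑ v : V, (d v / g + 1) := Finset.sum_le_sum fun v _ => hpt v
    _ = (∑ v : V, d v / g) + n := by
        rw [Finset.sum_add_distrib, Finset.sum_const, card_univ, smul_eq_mul, mul_one]
  have h2 : (∑ v : V, d v / g) ≤ m / g := by
    rw [Nat.le_div_iff_mul_le (by omega), Finset.sum_mul]
    exact Finset.sum_le_sum fun v _ => Nat.div_mul_le_self _ _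
  have h3 : m ≤ n * g := by have := le_smul_ceilDiv (a := n) (b := m) (by omega); simpa [smul_eq_mul] using this
  have h4 : m / g ≤ n := by
    calc m / g ≤ n * g / g := Nat.div_le_div_right h3
    _ = n := Nat.mul_div_cancel _ (by omega)
  calc ∑ v : V, (d v ⌈/⌉ g) ≤ (∑ v : V, d v / g) + n := h1
  _ ≤ m / g + n := Nat.add_le_add_right h2 n
  _ ≤ n + n := Nat.add_le_add_right h4 n
  _ = 2 * n := by ring
end
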